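/- arXiv:1802.01948 — 2 statements merged into one kernel-verified Lean document; each statement's English description precedes it below -/
import Mathlib

section
/- Let r ≥ 4, let H be an r-uniform hypergraph, and let G be the simple graph obtained from H by replacing each hyperedge by a clique on its vertex set. If G contains a clique on a set h of r vertices such that h is not a hyperedge of H, then H contains an avoidable configuration, i.e., a connected subhypergraph C with n(C) ≥ 2 and at most C(r,2) hyperedges. -/
/-- A (finite) hypergraph: a finite vertex set together with a finite set of hyperedges,
each a subset of the vertex set. -/
structure FinHypergraph (V : Type*) where
  verts : Finset V
  edges : Finset (Finset V)
  subset_verts : ∀ e ∈ edges, e ⊆ verts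

namespace FinHypergraph

variable {V : Type*}

/-- `H` is `r`-uniform: every hyperedge has exactly `r` vertices. -/
def Uniform (r : ℕ) (H : FinHypergraph V) : Prop := ∀ e ∈ H.edges, e.card = r

/-- The graph on the vertices in which two distinct vertices are adjacent iff they lie in a
common hyperedge. -/
def assoc (H : FinHypergraph V) : SimpleGraph V where
  Adj u v := u ≠ v ∧ ∃ e ∈ H.edges, u ∈ e ∧ v ∈ e
  symm := by
    constructor
    rintro u v ⟨h1, e, he, hu, hv⟩
    exact ⟨h1.symm, e, he, hv, hu⟩
  loopless := by constructor; rintro u ⟨h1, -⟩; exact h1 rfl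

/-- The number of connected components of `H` (isolated vertices of `verts` count). -/
noncomputable def componentCount (H : FinHypergraph V) : ℕ :=
  Set.ncard ((fun v => H.assoc.connectedComponentMk v) '' ↑H.verts)

/-- The nullity `n(H) = (r-1)e(H) + c(H) - |H|` of an `r`-uniform hypergraph. -/
noncomputable def nullity (r : ℕ) (H : FinHypergraph V) : ℤ :=
  ((r : ℤ) - 1) * H.edges.card + H.componentCount - H.verts.card

/-- `H` is connected: nonempty, and any two vertices are joined by a path of hyperedges. -/
def Connected (H : FinHypergraph V) : Prop :=
  H.verts.Nonempty ∧ ∀ u ∈ H.verts, ∀ v ∈ H.verts, H.assoc.Reachable u v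

/-- The nullity `n(H) = (r-1)e(H) + 1 - |H|` of a connected `r`-uniform hypergraph. -/
def nullity1 (r : ℕ) (H : FinHypergraph V) : ℤ :=
  ((r : ℤ) - 1) * H.edges.card + 1 - H.verts.card

end FinHypergraph

/-! Choose for every pair of `h` one hyperedge containing it. The chosen hyperedges `E` (at
most `C(r,2)` of them) form a connected configuration, since each meets the clique `h` in at
least two vertices. Its vertices outside `h` number at most `∑_{e ∈ E} (r - |e ∩ h|)`, so
`n(E) ≥ ∑_{e ∈ E} (|e ∩ h| - 1) + 1 - r`, and this sum is at least `r + 1`: if some `e₀ ∈ E`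
meets `h` in at least three vertices, pick `x ∈ h \ e₀`; the hyperedges through `x` cover
`h - x` and contribute at least `r - 1`, and `e₀` contributes at least `2`. Otherwise every
`e ∈ E` meets `h` in exactly a pair, and there are at least `C(r,2) ≥ r + 1` of them. -/

theorem Nat.add_one_le_choose_two {n : ℕ} (hn : 4 ≤ n) : n + 1 ≤ n.choose 2 := by
  obtain ⟨m, rfl⟩ := Nat.exists_eq_add_of_le' hn
  have pascal := Nat.choose_succ_succ' (m + 3) 1
  have h3 : 3 ≤ (m + 3).choose 2 := Nat.choose_le_choose 2 (by omega : 3 ≤ m + 3)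
  simp only [Nat.choose_one_right, Nat.reduceAdd] at pascal
  rw [show m + 4 = m + 3 + 1 from rfl]
  omega

namespace FinHypergraph

open Finset

variable {V : Type*}

def CoversPairs (E : Finset (Finset V)) (h : Finset V) : Prop :=
  ∀ x ∈ h, ∀ y ∈ h, x ≠ y → ∃ e ∈ E, x ∈ e ∧ y ∈ e

variable [DecidableEq V]

def ofEdges (E : Finset (Finset V)) : FinHypergraph V :=
  ⟨E.sup id, E, fun _ he => le_sup (f := id) he⟩

theorem reachable_ofEdges {E : Finset (Finset V)} {e : Finset V} (he : e ∈ E) {x y : V}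
    (hx : x ∈ e) (hy : y ∈ e) : (ofEdges E).assoc.Reachable x y := by
  by_cases hxy : x = y
  · exact hxy ▸ .refl x
  · exact SimpleGraph.Adj.reachable ⟨hxy, e, he, hx, hy⟩

theorem connected_ofEdges {E : Finset (Finset V)} {h : Finset V} (hh : 1 < #h)
    (hE : CoversPairs E h) (htwo : ∀ e ∈ E, 2 ≤ #(e ∩ h)) : (ofEdges E).Connected := by
  have reachable_h : ∀ v ∈ (ofEdges E).verts, ∃ x ∈ h, (ofEdges E).assoc.Reachable v x := by
    intro v hv
    obtain ⟨e, he, hve⟩ := mem_sup.mp hv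
    obtain ⟨x, hx, -⟩ := exists_mem_ne (htwo e he) v
    rw [mem_inter] at hx
    exact ⟨x, hx.2, reachable_ofEdges he hve hx.1⟩
  have h_reachable : ∀ x ∈ h, ∀ y ∈ h, (ofEdges E).assoc.Reachable x y := by
    intro x hx y hy
    by_cases hxy : x = y
    · exact hxy ▸ .refl x
    obtain ⟨e, he, hxe, hye⟩ := hE x hx y hy hxy
    exact reachable_ofEdges he hxe hye
  obtain ⟨x₀, hx₀, y₀, hy₀, hxy₀⟩ := one_lt_card.mp hh
  obtain ⟨e₀, he₀, hxe₀, -⟩ := hE x₀ hx₀ y₀ hy₀ hxy₀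
  refine ⟨⟨x₀, mem_sup.mpr ⟨e₀, he₀, hxe₀⟩⟩, fun u hu v hv => ?_⟩
  obtain ⟨x, hx, hux⟩ := reachable_h u hu
  obtain ⟨y, hy, hvy⟩ := reachable_h v hv
  exact hux.trans ((h_reachable x hx y hy).trans hvy.symm)

theorem card_sup_id_le_card_add_sum_card_sdiff (E : Finset (Finset V)) (h : Finset V) :
    #(E.sup id) ≤ #h + ∑ e ∈ E, #(e \ h) := calc
  #(E.sup id) ≤ #(h ∪ E.biUnion (· \ h)) := card_le_card fun v hv => by
      obtain ⟨e, he, hve⟩ := mem_sup.mp hv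
      by_cases hvh : v ∈ h
      · exact mem_union_left _ hvh
      · exact mem_union_right _ (mem_biUnion.mpr ⟨e, he, mem_sdiff.mpr ⟨hve, hvh⟩⟩)
  _ ≤ #h + #(E.biUnion (· \ h)) := card_union_le _ _
  _ ≤ #h + ∑ e ∈ E, #(e \ h) := by gcongr; exact card_biUnion_le

theorem le_nullity1_ofEdges {r : ℕ} {E : Finset (Finset V)} (hE : ∀ e ∈ E, #e = r)
    (h : Finset V) : ∑ e ∈ E, ((#(e ∩ h) : ℤ) - 1) + 1 - #h ≤ (ofEdges E).nullity1 r := by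
  have card_sdiff_eq : ∀ e ∈ E, (#(e \ h) : ℤ) = r - #(e ∩ h) := by
    intro e he
    have := card_sdiff_add_card_inter e h
    rw [hE e he] at this
    omega
  have card_verts : (#(E.sup id) : ℤ) ≤ #h + ∑ e ∈ E, ((r : ℤ) - #(e ∩ h)) := by
    rw [← sum_congr rfl card_sdiff_eq]
    exact_mod_cast card_sup_id_le_card_add_sum_card_sdiff E h
  have sum_eq : ∑ e ∈ E, ((#(e ∩ h) : ℤ) - 1)
      = ((r : ℤ) - 1) * #E - ∑ e ∈ E, ((r : ℤ) - #(e ∩ h)) := by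
    simp only [sum_sub_distrib, sum_const, nsmul_eq_mul]
    ring
  simp only [nullity1, ofEdges]
  linarith

namespace CoversPairs

variable {E : Finset (Finset V)} {h : Finset V}

theorem exists_subset_card_le {F : Finset (Finset V)} (hF : CoversPairs F h) :
    ∃ E ⊆ F, #E ≤ (#h).choose 2 ∧ CoversPairs E h ∧ ∀ e ∈ E, 2 ≤ #(e ∩ h) := by
  have pair_covered : ∀ p ∈ h.powersetCard 2, ∃ e ∈ F, p ⊆ e := by
    intro p hp
    obtain ⟨hph, hp2⟩ := mem_powersetCard.mp hp
    obtain ⟨x, y, hxy, rfl⟩ := card_eq_two.mp hp2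
    obtain ⟨e, he, hxe, hye⟩ := hF x (hph (by simp)) y (hph (by simp)) hxy
    exact ⟨e, he, by simp [insert_subset_iff, hxe, hye]⟩
  choose! f hfF hpf using pair_covered
  refine ⟨(h.powersetCard 2).image f, image_subset_iff.mpr hfF,
    card_image_le.trans (card_powersetCard 2 h).le, ?_, forall_mem_image.mpr ?_⟩
  · intro x hx y hy hxy
    have hp : {x, y} ∈ h.powersetCard 2 :=
      mem_powersetCard.mpr ⟨by simp [insert_subset_iff, hx, hy], card_pair hxy⟩
    exact ⟨f {x, y}, mem_image_of_mem f hp, hpf _ hp (by simp), hpf _ hp (by simp)⟩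
  · intro p hp
    obtain ⟨hph, hp2⟩ := mem_powersetCard.mp hp
    exact hp2 ▸ card_le_card (subset_inter (hpf p hp) hph)

theorem card_sub_one_le_sum_filter_mem (hE : CoversPairs E h) {x : V} (hx : x ∈ h) :
    #h - 1 ≤ ∑ e ∈ E with x ∈ e, (#(e ∩ h) - 1) := calc
  #h - 1 = #(h.erase x) := (card_erase_of_mem hx).symm
  _ ≤ #((E.filter (x ∈ ·)).biUnion fun e => (e ∩ h).erase x) := card_le_card fun y hy => by
      obtain ⟨hyx, hyh⟩ := mem_erase.mp hy
      obtain ⟨e, he, hxe, hye⟩ := hE x hx y hyh (Ne.symm hyx)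
      exact mem_biUnion.mpr
        ⟨e, mem_filter.mpr ⟨he, hxe⟩, mem_erase.mpr ⟨hyx, mem_inter.mpr ⟨hye, hyh⟩⟩⟩
  _ ≤ ∑ e ∈ E with x ∈ e, #((e ∩ h).erase x) := card_biUnion_le
  _ = ∑ e ∈ E with x ∈ e, (#(e ∩ h) - 1) := sum_congr rfl fun e he =>
      card_erase_of_mem (mem_inter.mpr ⟨(mem_filter.mp he).2, hx⟩)

theorem powersetCard_two_subset_image_inter (hE : CoversPairs E h)
    (hsmall : ∀ e ∈ E, #(e ∩ h) ≤ 2) : h.powersetCard 2 ⊆ E.image (· ∩ h) := by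
  intro p hp
  obtain ⟨hph, hp2⟩ := mem_powersetCard.mp hp
  obtain ⟨x, y, hxy, rfl⟩ := card_eq_two.mp hp2
  obtain ⟨e, he, hxe, hye⟩ := hE x (hph (by simp)) y (hph (by simp)) hxy
  have hsub : {x, y} ⊆ e ∩ h := subset_inter (by simp [insert_subset_iff, hxe, hye]) hph
  exact mem_image.mpr ⟨e, he, (eq_of_subset_of_card_le hsub (hp2 ▸ hsmall e he)).symm⟩

theorem card_add_one_le_sum_card_inter_sub_one (hE : CoversPairs E h) (hh : 4 ≤ #h)
    (hproper : ∀ e ∈ E, ¬h ⊆ e) (htwo : ∀ e ∈ E, 2 ≤ #(e ∩ h)) :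
    #h + 1 ≤ ∑ e ∈ E, (#(e ∩ h) - 1) := by
  by_cases hbig : ∃ e ∈ E, 3 ≤ #(e ∩ h)
  · obtain ⟨e₀, he₀, h3⟩ := hbig
    obtain ⟨x, hxh, hxe₀⟩ := not_subset.mp (hproper e₀ he₀)
    calc #h + 1 ≤ ∑ e ∈ E with x ∈ e, (#(e ∩ h) - 1) + (#(e₀ ∩ h) - 1) := by
          have := hE.card_sub_one_le_sum_filter_mem hxh
          omega
      _ = ∑ e ∈ insert e₀ {e ∈ E | x ∈ e}, (#(e ∩ h) - 1) := by
          rw [sum_insert (by simp [hxe₀]), add_comm]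
      _ ≤ ∑ e ∈ E, (#(e ∩ h) - 1) :=
          sum_le_sum_of_subset (insert_subset he₀ (filter_subset _ _))
  · push Not at hbig
    calc #h + 1 ≤ (#h).choose 2 := Nat.add_one_le_choose_two hh
      _ ≤ #(E.image (· ∩ h)) :=
          (card_powersetCard 2 h).symm ▸ card_le_card
            (hE.powersetCard_two_subset_image_inter fun e he => by have := hbig e he; omega)
      _ ≤ #E := card_image_le
      _ = ∑ e ∈ E, (#(e ∩ h) - 1) := by
          rw [card_eq_sum_ones]
          exact sum_congr rfl fun e he => by have := htwo e he; have := hbig e he; omega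

end CoversPairs

end FinHypergraph

/-- Lemma 2.2: let `r ≥ 4`, let `H` be an `r`-uniform hypergraph and `G` the
graph obtained by replacing each hyperedge by a clique.  If `G` contains a clique on an
`r`-set `h` which is not a hyperedge of `H`, then `H` contains an avoidable configuration:
a connected subhypergraph `C` with nullity `≥ 2` and at most `C(r,2)` hyperedges. -/
theorem stmt_8 {V : Type*} [DecidableEq V] (r : ℕ) (hr : 4 ≤ r) (H : FinHypergraph V)
    (hu : H.Uniform r) (h : Finset V) (hcard : h.card = r) (hnot : h ∉ H.edges)
    (hclique : ∀ u ∈ h, ∀ v ∈ h, u ≠ v → ∃ e ∈ H.edges, u ∈ e ∧ v ∈ e) :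
    ∃ C : FinHypergraph V, C.edges ⊆ H.edges ∧ C.verts = C.edges.sup id ∧
      C.Connected ∧ C.edges.card ≤ r.choose 2 ∧ 2 ≤ C.nullity1 r := by
  obtain ⟨E, hEH, hEcard, hEcov, htwo⟩ :=
    FinHypergraph.CoversPairs.exists_subset_card_le (F := H.edges) hclique
  have hproper : ∀ e ∈ E, ¬h ⊆ e := fun e he hsub =>
    hnot (Finset.eq_of_subset_of_card_le hsub (by rw [hu e (hEH he), hcard]) ▸ hEH he)
  have hsum := hEcov.card_add_one_le_sum_card_inter_sub_one (hcard ▸ hr) hproper htwo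
  have hnull := FinHypergraph.le_nullity1_ofEdges (fun e he => hu e (hEH he)) h
  refine ⟨FinHypergraph.ofEdges E, hEH, rfl,
    FinHypergraph.connected_ofEdges (by omega) hEcov htwo, hcard ▸ hEcard, ?_⟩
  have hsum_cast : ((∑ e ∈ E, ((e ∩ h).card - 1) : ℕ) : ℤ)
      = ∑ e ∈ E, (((e ∩ h).card : ℤ) - 1) := by
    rw [Nat.cast_sum]
    exact Finset.sum_congr rfl fun e he => by have := htwo e he; omega
  omega
end

section
/- Let F be a 2-connected graph on r vertices and let H_F be an F-graph (a set of distinct copies of F on a vertex set) that is edge-minimal with the property that G(H_F), the union of these copies, contains a copy F_0 of F that is not itself one of the copies in H_F. Then the underlying r-uniform multi-hypergraph Ĥ_F (one hyperedge per copy, given by its vertex set) has no pendant hyperedge, i.e., no hyperedge meeting the union of the remaining hyperedges in exactly one vertex. -/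
/-- `E` is (the edge set of) a copy of the graph `F` on the vertex type `V`: the image of
the edges of `F` under an injection of the vertices. -/
def IsCopy {α V : Type*} (F : SimpleGraph α) (E : Finset (Sym2 V)) : Prop :=
  ∃ φ : α ↪ V, (↑E : Set (Sym2 V)) = Sym2.map φ '' F.edgeSet

/-- The set of vertices spanned by a finite set of graph edges. -/
def vertsOf {V : Type*} [DecidableEq V] (E : Finset (Sym2 V)) : Finset V :=
  E.sup fun e => Sym2.lift ⟨fun a b => ({a, b} : Finset V), fun a b => Finset.pair_comm a b⟩ e

/-- `F` is 2-connected: at least 3 vertices and removing any single vertex leaves a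
connected graph. -/
def TwoConnected {α : Type*} [Fintype α] (F : SimpleGraph α) : Prop :=
  3 ≤ Fintype.card α ∧ ∀ v : α, (F.induce ({v}ᶜ : Set α)).Connected

lemma mem_vertsOf {V : Type*} [DecidableEq V] {E : Finset (Sym2 V)} {u : V} :
    u ∈ vertsOf E ↔ ∃ e ∈ E, u ∈ e := by
  unfold vertsOf
  rw [Finset.mem_sup]
  apply exists_congr; intro e
  apply and_congr_right; intro _
  induction e using Sym2.ind with
  | _ a b => simp [Sym2.mem_iff]

lemma walk_pres {β : Type*} {G : SimpleGraph β} (P : β → Prop)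
    (h : ∀ x y, G.Adj x y → P x → P y) {x y : β} (w : G.Walk x y) : P x → P y := by
  induction w with
  | nil => exact id
  | cons h' p ih => exact fun hx => ih (h _ _ h' hx)

lemma copy_card {α V : Type*} [Fintype α] {F : SimpleGraph α} {E : Finset (Sym2 V)}
    (h : IsCopy F E) : (E.card : ℕ) = F.edgeSet.ncard := by
  obtain ⟨φ, hφ⟩ := h
  have h1 : (↑E : Set (Sym2 V)).ncard = E.card := Set.ncard_coe_finset E
  rw [← h1, hφ, Set.ncard_image_of_injective _ (Sym2.map.injective φ.injective)]

/-- let `F` be 2-connected and let `𝓕` be an `F`-graph (a set of distinct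
copies of `F`) which is edge-minimal subject to its union graph containing a copy `E₀` of
`F` which is not itself one of the copies.  Then the underlying multi-hypergraph (one
hyperedge, the vertex set, per copy) has no pendant hyperedge: no copy meets the union of
the remaining copies in exactly one vertex. -/
theorem stmt_13 {α V : Type*} [Fintype α] [DecidableEq V]
    (F : SimpleGraph α) (hF : TwoConnected F)
    (𝓕 : Finset (Finset (Sym2 V))) (hcopies : ∀ E ∈ 𝓕, IsCopy F E)
    (E₀ : Finset (Sym2 V)) (hE₀ : IsCopy F E₀) (hnot : E₀ ∉ 𝓕)
    (hcover : ∀ e ∈ E₀, ∃ E ∈ 𝓕, e ∈ E)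
    (hmin : ∀ 𝓕' ⊂ 𝓕, ¬ (∀ e ∈ E₀, ∃ E ∈ 𝓕', e ∈ E)) :
    ∀ E ∈ 𝓕, (vertsOf E ∩ (𝓕.erase E).sup vertsOf).card ≠ 1 := by
  classical
  intro E hE hcard
  obtain ⟨v, hv⟩ := Finset.card_eq_one.mp hcard
  set R : Finset V := (𝓕.erase E).sup vertsOf with hR
  -- v ∈ vertsOf E
  have hvE : v ∈ vertsOf E := by
    have : v ∈ vertsOf E ∩ R := hv ▸ Finset.mem_singleton_self v
    exact (Finset.mem_inter.mp this).1
  -- sep: anything in vertsOf E and R equals v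
  have hsep : ∀ u : V, u ∈ vertsOf E → u ∈ R → u = v := by
    intro u h1 h2
    have : u ∈ vertsOf E ∩ R := Finset.mem_inter.mpr ⟨h1, h2⟩
    rwa [hv, Finset.mem_singleton] at this
  obtain ⟨φ, hφ⟩ := hE₀
  -- edge classification
  have hclass : ∀ p q : α, F.Adj p q →
      (φ p ∈ vertsOf E ∧ φ q ∈ vertsOf E) ∨ (φ p ∈ R ∧ φ q ∈ R) := by
    intro p q hpq
    have he : s(φ p, φ q) ∈ E₀ := by
      have : (s(φ p, φ q) : Sym2 V) ∈ (↑E₀ : Set (Sym2 V)) := by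
        rw [hφ]; exact ⟨s(p, q), hpq, rfl⟩
      exact this
    obtain ⟨E', hE', heE'⟩ := hcover _ he
    by_cases hEE : E' = E
    · left
      subst hEE
      constructor <;>
      · apply mem_vertsOf.mpr
        exact ⟨_, heE', by simp [Sym2.mem_iff]⟩
    · right
      have hmem : E' ∈ 𝓕.erase E := Finset.mem_erase.mpr ⟨hEE, hE'⟩
      have hle : vertsOf E' ⊆ R := Finset.le_sup (f := vertsOf) hmem
      constructor <;>
      · apply hle
        apply mem_vertsOf.mpr
        exact ⟨_, heE', by simp [Sym2.mem_iff]⟩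
  -- minimality: edge e₀ in E₀ ∩ E only in E
  have herase : 𝓕.erase E ⊂ 𝓕 := Finset.erase_ssubset hE
  have hminE := hmin _ herase
  push_neg at hminE
  obtain ⟨e₀, he₀E₀, he₀⟩ := hminE
  obtain ⟨E', hE', he₀E'⟩ := hcover _ he₀E₀
  have hE'E : E' = E := by
    by_contra h
    exact he₀ E' (Finset.mem_erase.mpr ⟨h, hE'⟩) he₀E'
  rw [hE'E] at he₀E'
  -- e₀ = s(φ p₀, φ q₀) with F.Adj p₀ q₀
  have : e₀ ∈ (↑E₀ : Set (Sym2 V)) := he₀E₀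
  rw [hφ] at this
  obtain ⟨e', he', he'eq⟩ := this
  induction e' using Sym2.ind with
  | _ p₀ q₀ =>
  have hadj : F.Adj p₀ q₀ := he'
  have he₀eq : e₀ = s(φ p₀, φ q₀) := he'eq.symm
  -- endpoints of e₀ in vertsOf E
  have hp₀E : φ p₀ ∈ vertsOf E := mem_vertsOf.mpr ⟨e₀, he₀E', by rw [he₀eq]; simp⟩
  have hq₀E : φ q₀ ∈ vertsOf E := mem_vertsOf.mpr ⟨e₀, he₀E', by rw [he₀eq]; simp⟩
  have hne : φ p₀ ≠ φ q₀ := fun h => hadj.ne (φ.injective h)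
  -- pick b with φ b ∈ vertsOf E, φ b ≠ v
  obtain ⟨b, hbE, hbv⟩ : ∃ b : α, φ b ∈ vertsOf E ∧ φ b ≠ v := by
    by_cases h : φ p₀ = v
    · exact ⟨q₀, hq₀E, fun hh => hne (h.trans hh.symm)⟩
    · exact ⟨p₀, hp₀E, h⟩
  -- T nonempty: ∃ c, φ c ∉ vertsOf E
  obtain ⟨c, hcE⟩ : ∃ c : α, φ c ∉ vertsOf E := by
    by_contra h
    push_neg at h
    -- then E₀ ⊆ E
    have hsub : E₀ ⊆ E := by
      intro e he
      have : e ∈ (↑E₀ : Set (Sym2 V)) := he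
      rw [hφ] at this
      obtain ⟨e', he', he'eq⟩ := this
      induction e' using Sym2.ind with
      | _ p q =>
      have hadjpq : F.Adj p q := he'
      obtain ⟨E', hE', heE'⟩ := hcover _ he
      by_cases hEE : E' = E
      · exact hEE ▸ heE'
      · exfalso
        have hmem : E' ∈ 𝓕.erase E := Finset.mem_erase.mpr ⟨hEE, hE'⟩
        have hle : vertsOf E' ⊆ R := Finset.le_sup (f := vertsOf) hmem
        have hpR : φ p ∈ R := hle (mem_vertsOf.mpr ⟨e, heE', by rw [← he'eq]; simp⟩)
        have hqR : φ q ∈ R := hle (mem_vertsOf.mpr ⟨e, heE', by rw [← he'eq]; simp⟩)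
        have hp := hsep _ (h p) hpR
        have hq := hsep _ (h q) hqR
        exact hadjpq.ne (φ.injective (hp.trans hq.symm))
    have hcards : E₀.card = E.card := by
      rw [copy_card ⟨φ, hφ⟩, copy_card (hcopies E hE)]
    have : E₀ = E := Finset.eq_of_subset_of_card_le hsub (le_of_eq hcards.symm)
    exact hnot (this ▸ hE)
  have hcv : φ c ≠ v := fun h => hcE (h ▸ hvE)
  -- pick a such that any d ≠ a has φ d ≠ v
  obtain ⟨a, hab, hac, ha⟩ : ∃ a : α, a ≠ b ∧ a ≠ c ∧ ∀ d : α, d ≠ a → φ d ≠ v := by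
    by_cases h : ∃ a : α, φ a = v
    · obtain ⟨a, ha⟩ := h
      refine ⟨a, ?_, ?_, ?_⟩
      · intro hh; exact hbv (hh ▸ ha)
      · intro hh; exact hcv (hh ▸ ha)
      · intro d hd hdv
        exact hd (φ.injective (hdv.trans ha.symm))
    · push_neg at h
      have : ({b, c} : Finset α).card < Fintype.card α := by
        calc ({b, c} : Finset α).card ≤ 2 := Finset.card_insert_le _ _ |>.trans (by simp)
        _ < 3 := by norm_num
        _ ≤ Fintype.card α := hF.1
      have h2 : ¬ (Finset.univ ⊆ ({b, c} : Finset α)) := fun hsub =>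
        absurd (Finset.card_le_card hsub) (not_le.mpr (by simpa using this))
      obtain ⟨a, _, haa⟩ := Finset.not_subset.mp h2
      simp only [Finset.mem_insert, Finset.mem_singleton, not_or] at haa
      exact ⟨a, haa.1, haa.2, fun d _ => h d⟩
  -- connectivity of F - a
  have hconn := hF.2 a
  have hbmem : b ∈ ({a}ᶜ : Set α) := by simp [Ne.symm hab]
  have hcmem : c ∈ ({a}ᶜ : Set α) := by simp [Ne.symm hac]
  obtain ⟨w⟩ := hconn ⟨b, hbmem⟩ ⟨c, hcmem⟩
  -- propagate "φ · ∈ vertsOf E" along the walk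
  have key : ∀ x y : ({a}ᶜ : Set α), (F.induce ({a}ᶜ : Set α)).Adj x y →
      φ x.1 ∈ vertsOf E → φ y.1 ∈ vertsOf E := by
    rintro ⟨x, hx⟩ ⟨y, hy⟩ hadj hxE
    have hFxy : F.Adj x y := hadj
    rcases hclass x y hFxy with ⟨_, h2⟩ | ⟨h1, _⟩
    · exact h2
    · exfalso
      have := hsep _ hxE h1
      exact ha x (by simpa using hx) this
  have := walk_pres (fun x : ({a}ᶜ : Set α) => φ x.1 ∈ vertsOf E) key w hbE
  exact hcE this
end
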